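/- arXiv:1510.09187 — 2 statements merged into one kernel-verified Lean document; each statement's English description precedes it below -/
import Mathlib

section
/- Let X ~ Bin(n, p) with 0 < p < 1. Then P[X ≤ n/(log n)^2] ≤ e^{3 n log log n / (log n)^2} · (1−p)^{n − n/(log n)^2}, for n sufficiently large. -/
/-!
Every term of the lower tail with `i ≤ k` is at most `n ^ m / m! · (1 - p) ^ (n - k)`, where
`m = ⌊k⌋`, because `n ^ i / i!` increases in `i ≤ n`; there are `m + 1 ≤ e ^ k` such terms.
From `m ^ m / m! ≤ e ^ m` we get `n ^ m / m! ≤ (e n / m) ^ m ≤ (2 e n / k) ^ m`, so the prefactor is at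
most `exp (k (2 + log 2 + log (n / k)))`. For `k = n / (log n)²` this is
`exp (k (2 + log 2 + 2 log log n)) ≤ exp (3 k log log n)` as soon as `log log n ≥ 3`.
-/

open Real Finset Filter

lemma pow_div_factorial_le_of_le {x : ℝ} {i m : ℕ} (hi : i ≤ m) (hm : (m : ℝ) ≤ x) :
    x ^ i / i.factorial ≤ x ^ m / m.factorial := by
  induction m, hi using Nat.le_induction with
  | base => rfl
  | succ j _ ih =>
    have hj : (j : ℝ) + 1 ≤ x := by exact_mod_cast hm
    have hx : 0 ≤ x := by linarith
    calc x ^ i / i.factorial ≤ x ^ j / j.factorial := ih (by linarith)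
      _ ≤ x ^ j / j.factorial * (x / (j + 1)) := le_mul_of_one_le_right (by positivity)
          ((one_le_div (by positivity)).mpr hj)
      _ = x ^ (j + 1) / (j + 1).factorial := by
          rw [Nat.factorial_succ]; push_cast; field_simp; ring

lemma pow_div_factorial_le_exp_one_mul_div_pow {x : ℝ} (hx : 0 ≤ x) (m : ℕ) :
    x ^ m / m.factorial ≤ (exp 1 * (x / m)) ^ m := by
  rcases Nat.eq_zero_or_pos m with rfl | hm
  · simp
  have hmR : (0 : ℝ) < m := by exact_mod_cast hm
  calc x ^ m / m.factorial = (x / m) ^ m * ((m : ℝ) ^ m / m.factorial) := by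
        rw [div_pow]; field_simp
    _ ≤ (x / m) ^ m * exp m :=
        mul_le_mul_of_nonneg_left (pow_div_factorial_le_exp _ hmR.le m) (by positivity)
    _ = (exp 1 * (x / m)) ^ m := by rw [mul_pow, exp_one_pow]; ring

lemma binomial_lowerTail_le_floor_add_one_mul {p : ℝ} (hp0 : 0 ≤ p) (hp1 : p ≤ 1) {n : ℕ} {k : ℝ}
    (hkn : k ≤ n) :
    ∑ i ∈ range (n + 1),
        (if (i : ℝ) ≤ k then (n.choose i : ℝ) * p ^ i * (1 - p) ^ (n - i) else 0)
      ≤ (⌊k⌋₊ + 1) * ((n : ℝ) ^ ⌊k⌋₊ / ⌊k⌋₊.factorial) * (1 - p) ^ ((n : ℝ) - k) := by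
  set m := ⌊k⌋₊
  have hterm : ∀ i ∈ range (n + 1),
      (if (i : ℝ) ≤ k then (n.choose i : ℝ) * p ^ i * (1 - p) ^ (n - i) else 0)
        ≤ if i ∈ range (m + 1) then (n : ℝ) ^ m / m.factorial * (1 - p) ^ ((n : ℝ) - k) else 0 := by
    intro i hi
    split_ifs with hik him
    · have hin : i ≤ n := Nat.lt_succ_iff.mp (mem_range.mp hi)
      gcongr ?_ * ?_
      · calc (n.choose i : ℝ) * p ^ i ≤ n.choose i := mul_le_of_le_one_right (by positivity)
              (pow_le_one₀ hp0 hp1)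
          _ ≤ (n : ℝ) ^ i / i.factorial := Nat.choose_le_pow_div i n
          _ ≤ (n : ℝ) ^ m / m.factorial := pow_div_factorial_le_of_le (Nat.le_floor hik)
              ((Nat.floor_le (i.cast_nonneg.trans hik)).trans hkn)
      · rw [← rpow_natCast, Nat.cast_sub hin]
        exact rpow_le_rpow_of_exponent_ge' (by linarith) (by linarith) (by linarith)
          (by linarith)
    · exact absurd (mem_range_succ_iff.mpr (Nat.le_floor hik)) him
    · positivity
    · rfl
  calc _ ≤ ∑ i ∈ range (n + 1),
        if i ∈ range (m + 1) then (n : ℝ) ^ m / m.factorial * (1 - p) ^ ((n : ℝ) - k) else 0 :=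
        sum_le_sum hterm
    _ ≤ ∑ i ∈ range (m + 1), (n : ℝ) ^ m / m.factorial * (1 - p) ^ ((n : ℝ) - k) := by
        rw [sum_ite_mem]
        exact sum_le_sum_of_subset_of_nonneg inter_subset_right fun _ _ _ ↦
          mul_nonneg (by positivity) (rpow_nonneg (by linarith) _)
    _ = _ := by rw [sum_const, card_range, nsmul_eq_mul]; push_cast; ring

lemma floor_add_one_mul_pow_div_factorial_le {x k : ℝ} (hk : 1 ≤ k) (hkx : k ≤ x) :
    (⌊k⌋₊ + 1) * (x ^ ⌊k⌋₊ / (⌊k⌋₊).factorial) ≤ exp (k * (2 + log 2 + log (x / k))) := by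
  set m := ⌊k⌋₊
  set c := 1 + log 2 + log (x / k)
  have hx : 0 ≤ x := by linarith
  have hm : (m : ℝ) ≤ k := Nat.floor_le (by linarith)
  have hm1 : (1 : ℝ) ≤ m := by exact_mod_cast Nat.one_le_floor_iff k |>.mpr hk
  have hkm : k ≤ 2 * m := by linarith [Nat.lt_floor_add_one k]
  have hc : 0 ≤ c := by
    have : 0 ≤ log (x / k) := log_nonneg ((one_le_div (by linarith)).mpr hkx)
    linarith [log_nonneg one_le_two]
  have hexp_c : exp c = exp 1 * (2 * (x / k)) := by
    rw [exp_add, exp_add, exp_log two_pos, exp_log (div_pos (by linarith) (by linarith))]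
    ring
  have hxm : x / m ≤ 2 * (x / k) := by
    rw [div_le_iff₀ (by linarith)]
    calc x ≤ x * (2 * m / k) := le_mul_of_one_le_right hx ((one_le_div (by linarith)).mpr hkm)
      _ = 2 * (x / k) * m := by ring
  calc (m + 1) * (x ^ m / m.factorial) ≤ exp k * (exp 1 * (x / m)) ^ m := by
        gcongr
        · linarith [add_one_le_exp k]
        · exact pow_div_factorial_le_exp_one_mul_div_pow hx m
    _ ≤ exp k * exp (m * c) := by
        rw [exp_nat_mul, hexp_c]
        gcongr
    _ ≤ exp k * exp (k * c) := by gcongr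
    _ = exp (k * (2 + log 2 + log (x / k))) := by
        rw [← exp_add]
        congr 1
        simp only [c]
        ring

/-- For X ~ Bin(n,p) with 0 < p < 1 and n large,
P[X ≤ n/(log n)²] ≤ e^{3 n log log n/(log n)²} · (1−p)^{n − n/(log n)²}. -/
theorem stmt_6 (p : ℝ) (hp0 : 0 < p) (hp1 : p < 1) :
    ∃ N : ℕ, ∀ n : ℕ, N ≤ n →
      ∑ i ∈ Finset.range (n + 1),
          (if (i : ℝ) ≤ (n : ℝ) / (Real.log n) ^ 2 then
            (n.choose i : ℝ) * p ^ i * (1 - p) ^ (n - i) else 0)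
        ≤ Real.exp (3 * n * Real.log (Real.log n) / (Real.log n) ^ 2) *
            (1 - p) ^ ((n : ℝ) - (n : ℝ) / (Real.log n) ^ 2) := by
  have h_loglog : ∀ᶠ x : ℝ in atTop, 3 ≤ log (log x) :=
    (tendsto_log_atTop.comp tendsto_log_atTop).eventually_ge_atTop 3
  have h_log : ∀ᶠ x : ℝ in atTop, 1 ≤ log x := tendsto_log_atTop.eventually_ge_atTop 1
  have h_sq : ∀ᶠ x : ℝ in atTop, log x ^ 2 ≤ x := by
    filter_upwards [(isLittleO_pow_log_id_atTop (n := 2)).eventuallyLE, eventually_ge_atTop 0]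
      with x hx hx0
    simpa [abs_of_nonneg hx0, sq_abs] using hx
  obtain ⟨N, hN⟩ := eventually_atTop.mp
    (tendsto_natCast_atTop_atTop.eventually (h_loglog.and (h_log.and h_sq)))
  refine ⟨N, fun n hn => ?_⟩
  obtain ⟨hLL, hL, hL2⟩ := hN n hn
  set L := log n
  set k := (n : ℝ) / L ^ 2
  have hn0 : (n : ℝ) ≠ 0 := (lt_of_lt_of_le (by positivity) hL2).ne'
  have hk1 : 1 ≤ k := (one_le_div (by positivity)).mpr hL2
  have hkn : k ≤ n := div_le_self (by linarith) (one_le_pow₀ hL)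
  have hexponent : k * (2 + log 2 + log (n / k)) ≤ 3 * n * log L / L ^ 2 := by
    have hnk : (n : ℝ) / k = L ^ 2 := div_div_cancel₀ hn0
    rw [hnk, log_pow]
    calc k * (2 + log 2 + (2 : ℕ) * log L) ≤ k * (3 * log L) := by
          gcongr
          push_cast
          linarith [log_two_lt_d9]
      _ = 3 * n * log L / L ^ 2 := by ring
  calc _ ≤ _ := binomial_lowerTail_le_floor_add_one_mul hp0.le hp1.le hkn
    _ ≤ exp (k * (2 + log 2 + log (n / k))) * (1 - p) ^ ((n : ℝ) - k) := by
        gcongr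
        exact floor_add_one_mul_pow_div_factorial_le hk1 hkn
    _ ≤ _ := by gcongr
end

section
/- Let s ≥ 3, let A be a set of a vertices such that every subset of A of size a/(log a)² contains a clique of size s−2 in a fixed graph G_A[A], let B be disjoint from A with G_A[B] empty, and let each A–B edge be present independently with probability p. Then for any collection E of vertex pairs from B, the expected number of pairs in E not completed by G_A (i.e., pairs {u,v} such that adding uv creates no K_s) is at most (1−p²)^{a − a/log a} · |E|, for n sufficiently large. -/
/-!
A pair `{u, v} ⊆ B` can fail to be completed only if its common neighbourhood in `A` has at most
`m = a / (log a)²` vertices, since any `m` of them span a `K_{s-2}`. The size `X` of that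
neighbourhood counts `a` independent events of probability `p²`, so the exponential Markov
inequality with `y = (log a)⁻²` gives
`P(X ≤ m) ≤ y⁻ᵐ (1 - p² + p² y)ᵃ ≤ (1 - p²)ᵃ exp(m (2 log log a + p² / (1 - p²)))`,
which is at most `(1 - p²)^(a - a / log a)` once
`2 log log a + p² / (1 - p²) ≤ -log (1 - p²) log a`.
Linearity of expectation over `E` finishes the proof.
-/

open MeasureTheory
open scoped ENNReal Classical

/-- The random graph on A ⊕ B where A = Fin a carries the fixed graph G_A, B is
empty, and the A–B edges are given by ω. -/
def bipRandomGraph (a : ℕ) (B : Type*) (GA : SimpleGraph (Fin a))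
    (ω : Fin a → B → Bool) : SimpleGraph (Fin a ⊕ B) where
  Adj x y := match x, y with
    | .inl i, .inl j => GA.Adj i j
    | .inl i, .inr b => ω i b = true
    | .inr b, .inl i => ω i b = true
    | .inr _, .inr _ => False
  symm := by
    constructor
    intro x y h
    cases x <;> cases y <;> simp_all <;> exact h.symm
  loopless := by
    constructor
    intro x
    cases x <;> simp

namespace SimpleGraph

def Completes {V : Type*} (G : SimpleGraph V) (n : ℕ) (x y : V) : Prop :=
  ∃ t : Finset V, (G ⊔ fromEdgeSet {s(x, y)}).IsNClique n t ∧ x ∈ t ∧ y ∈ t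

lemma completes_of_isNClique {V : Type*} {G : SimpleGraph V} {x y : V} (hxy : x ≠ y)
    {n : ℕ} {t : Finset V} (ht : G.IsNClique n t) (hx : ∀ z ∈ t, G.Adj x z)
    (hy : ∀ z ∈ t, G.Adj y z) : G.Completes (n + 2) x y := by
  set H := G ⊔ fromEdgeSet {s(x, y)}
  have hGH : G ≤ H := le_sup_left
  have hxy' : H.Adj x y := Or.inr ⟨rfl, hxy⟩
  refine ⟨insert x (insert y t), ((ht.mono hGH).insert fun z hz => hGH (hy z hz)).insert ?_,
    by simp, by simp⟩
  intro z hz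
  rcases Finset.mem_insert.mp hz with rfl | hz
  exacts [hxy', hGH (hx z hz)]

end SimpleGraph

lemma map_inl_le_bipRandomGraph {a : ℕ} {B : Type*} (GA : SimpleGraph (Fin a))
    (ω : Fin a → B → Bool) : GA.map Function.Embedding.inl ≤ bipRandomGraph a B GA ω := by
  rintro _ _ ⟨-, i, j, h, rfl, rfl⟩
  exact h

lemma completes_bipRandomGraph {a s : ℕ} (hs : 2 ≤ s) {B : Type*} {GA : SimpleGraph (Fin a)}
    {ω : Fin a → B → Bool} {u v : B} (huv : u ≠ v) {t : Finset (Fin a)}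
    (ht : GA.IsNClique (s - 2) t) (htuv : ∀ i ∈ t, ω i u = true ∧ ω i v = true) :
    (bipRandomGraph a B GA ω).Completes s (.inr u) (.inr v) := by
  rw [← Nat.sub_add_cancel hs]
  refine SimpleGraph.completes_of_isNClique (Sum.inr_injective.ne huv)
    ((ht.map (f := .inl)).mono (map_inl_le_bipRandomGraph GA ω))
    (fun z hz => ?_) (fun z hz => ?_) <;>
    obtain ⟨i, hi, rfl⟩ := Finset.mem_map.mp hz
  exacts [(htuv i hi).1, (htuv i hi).2]

lemma card_filter_le_floor_of_not_completes {a s : ℕ} (hs : 2 ≤ s) {B : Type*}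
    {GA : SimpleGraph (Fin a)} {m : ℝ} (hm : 0 ≤ m)
    (hGA : ∀ S : Finset (Fin a), m ≤ S.card → ∃ t : Finset (Fin a), t ⊆ S ∧ GA.IsNClique (s - 2) t)
    {ω : Fin a → B → Bool} {u v : B} (huv : u ≠ v)
    (h : ¬ (bipRandomGraph a B GA ω).Completes s (.inr u) (.inr v)) :
    (Finset.univ.filter fun i => ω i u = true ∧ ω i v = true).card ≤ ⌊m⌋₊ := by
  by_contra hk
  obtain ⟨t, htS, ht⟩ := hGA _ ((Nat.floor_lt hm).mp (not_le.mp hk)).le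
  exact h (completes_bipRandomGraph hs huv ht fun i hi => (Finset.mem_filter.mp (htS hi)).2)

lemma lintegral_card_filter_eq_sum_measure {α Ω : Type*} [MeasurableSpace Ω] (μ : Measure Ω)
    (E : Finset α) (P : α → Ω → Prop) [∀ e ω, Decidable (P e ω)]
    (hP : ∀ e ∈ E, MeasurableSet {ω | P e ω}) :
    ∫⁻ ω, ((E.filter fun e => P e ω).card : ℝ≥0∞) ∂μ = ∑ e ∈ E, μ {ω | P e ω} := by
  have hind (ω : Ω) : ((E.filter fun e => P e ω).card : ℝ≥0∞)
      = ∑ e ∈ E, {ω | P e ω}.indicator 1 ω := by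
    simp only [Finset.card_filter, Nat.cast_sum, Nat.cast_ite, Nat.cast_one, Nat.cast_zero,
      Set.indicator_apply, Set.mem_ofPred_eq, Pi.one_apply]
  simp_rw [hind]
  rw [lintegral_finsetSum' _ fun e he => (measurable_one.indicator (hP e he)).aemeasurable]
  exact Finset.sum_congr rfl fun e he => lintegral_indicator_one (hP e he)

section LowerTail
open Finset ProbabilityTheory

variable {ι Ω : Type*} [Fintype ι] {S : Set Ω} [DecidablePred (· ∈ S)]

lemma pow_card_filter_mem_eq_prod (y : ℝ≥0∞) (ω : ι → Ω) :
    y ^ #{i | ω i ∈ S} = ∏ i, S.piecewise (fun _ => y) 1 (ω i) := by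
  simp only [Set.piecewise, Pi.one_apply, prod_ite, prod_const, one_pow, mul_one]

variable [MeasurableSpace Ω] {ν : Measure Ω} [IsProbabilityMeasure ν]

lemma lintegral_pow_card_filter_mem (hS : MeasurableSet S) (y : ℝ≥0∞) :
    ∫⁻ ω, y ^ #{i | ω i ∈ S} ∂(Measure.pi fun _ : ι => ν) = (y * ν S + ν Sᶜ) ^ Fintype.card ι := by
  set g : Ω → ℝ≥0∞ := S.piecewise (fun _ => y) 1
  have hg : Measurable g := measurable_const.piecewise hS measurable_const
  have hg_int : ∫⁻ x, g x ∂ν = y * ν S + ν Sᶜ := by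
    rw [lintegral_piecewise hS]
    simp
  simp_rw [pow_card_filter_mem_eq_prod]
  rw [lintegral_prod_eq_prod_lintegral_of_indepFun _ _ (iIndepFun_pi fun _ => hg.aemeasurable)
    fun i => hg.comp (measurable_pi_apply i)]
  simp_rw [(measurePreserving_eval (fun _ : ι => ν) _).lintegral_comp hg, hg_int,
    Finset.prod_const, Finset.card_univ]

lemma pow_mul_measure_card_filter_mem_le_le (hS : MeasurableSet S) {y : ℝ≥0∞} (hy : y ≤ 1)
    (k : ℕ) :
    y ^ k * (Measure.pi fun _ : ι => ν) {ω | #{i | ω i ∈ S} ≤ k}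
      ≤ (y * ν S + ν Sᶜ) ^ Fintype.card ι := by
  have hmeas : Measurable fun ω : ι → Ω => y ^ #{i | ω i ∈ S} := by
    simp_rw [pow_card_filter_mem_eq_prod]
    exact Finset.measurable_prod _ fun i _ =>
      (measurable_const.piecewise hS measurable_const).comp (measurable_pi_apply i)
  calc y ^ k * (Measure.pi fun _ : ι => ν) {ω | #{i | ω i ∈ S} ≤ k}
      ≤ y ^ k * (Measure.pi fun _ : ι => ν) {ω | y ^ k ≤ y ^ #{i | ω i ∈ S}} := by
        gcongr
        exact pow_le_pow_right_of_le_one' hy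
    _ ≤ ∫⁻ ω, y ^ #{i | ω i ∈ S} ∂(Measure.pi fun _ : ι => ν) :=
        mul_meas_ge_le_lintegral₀ hmeas.aemeasurable _
    _ = _ := lintegral_pow_card_filter_mem hS y

end LowerTail

section Asymptotics
open Filter Real

lemma eventually_add_two_mul_log_le (C : ℝ) {c : ℝ} (hc : 0 < c) :
    ∀ᶠ x : ℝ in atTop, C + 2 * log x ≤ c * x := by
  filter_upwards [isLittleO_log_id_atTop.bound (by positivity : 0 < c / 4),
    (tendsto_id.const_mul_atTop (by positivity : 0 < c / 2)).eventually_ge_atTop C,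
    eventually_ge_atTop 0] with x hlog hC hx
  rw [norm_eq_abs, norm_eq_abs, id, abs_of_nonneg hx] at hlog
  rw [id] at hC
  have := le_abs_self (log x)
  linarith

lemma add_mul_inv_sq_pow_le {q L : ℝ} (hq0 : 0 < q) (hq1 : q < 1) (hL : 1 ≤ L)
    (hLc : q / (1 - q) + 2 * log L ≤ -log (1 - q) * L) {n k : ℕ} (hk : (k : ℝ) ≤ n / L ^ 2) :
    (q * (L ^ 2)⁻¹ + (1 - q)) ^ n ≤ ((L ^ 2)⁻¹) ^ k * (1 - q) ^ ((n : ℝ) - n / L) := by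
  have hq' : 0 < 1 - q := by linarith
  have hL0 : 0 < L := by linarith
  have hlogL : 0 ≤ log L := log_nonneg hL
  have hlog_base : log (q * (L ^ 2)⁻¹ + (1 - q)) ≤ log (1 - q) + q / (1 - q) / L ^ 2 := by
    have : q * (L ^ 2)⁻¹ + (1 - q) = (1 - q) * (q / (1 - q) / L ^ 2 + 1) := by
      field_simp
    rw [this, log_mul hq'.ne' (by positivity)]
    have := log_le_sub_one_of_pos (by positivity : 0 < q / (1 - q) / L ^ 2 + 1)
    linarith
  rw [← log_le_log_iff (by positivity) (by positivity), log_mul (by positivity) (by positivity),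
    log_rpow hq', log_pow, log_pow, log_inv, log_pow]
  have hkL : (k : ℝ) * (2 * log L) ≤ n / L ^ 2 * (2 * log L) := by gcongr
  have hn : (n : ℝ) / L ^ 2 * (q / (1 - q) + 2 * log L) ≤ n / L ^ 2 * (-log (1 - q) * L) := by
    gcongr
  have e1 : (n : ℝ) / L ^ 2 * (-log (1 - q) * L) = -log (1 - q) * (n / L) := by
    field_simp
  have e2 : (n : ℝ) * (q / (1 - q) / L ^ 2) = n / L ^ 2 * (q / (1 - q)) := by ring
  push_cast
  linarith [mul_le_mul_of_nonneg_left hlog_base n.cast_nonneg]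

end Asymptotics

lemma measure_pi_bernoulli_both_true {B : Type*} [Fintype B] {r : NNReal} (hr : r ≤ 1) {u v : B}
    (huv : u ≠ v) :
    Measure.pi (fun _ : B => (PMF.bernoulli r hr).toMeasure) {f | f u = true ∧ f v = true}
      = (r : ℝ≥0∞) ^ 2 := by
  have hset : {f : B → Bool | f u = true ∧ f v = true}
      = ((({u, v} : Finset B)) : Set B).pi fun _ => {true} := by
    ext f; simp
  rw [hset, Measure.pi_pi_finset, Finset.prod_pair huv, ← sq,
    PMF.toMeasure_apply_singleton _ _ (measurableSet_singleton _)]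
  simp [PMF.bernoulli_apply]

lemma measure_card_filter_both_true_le {a : ℕ} {B : Type*} [Fintype B] {p : ℝ} (hp0 : 0 < p)
    (hp1 : p < 1) {u v : B} (huv : u ≠ v) {y T : ℝ} (hy0 : 0 < y) (hy1 : y ≤ 1) {k : ℕ}
    (hT : (p ^ 2 * y + (1 - p ^ 2)) ^ a ≤ y ^ k * T) :
    (Measure.pi fun _ : Fin a => Measure.pi fun _ : B =>
        (PMF.bernoulli (Real.toNNReal p) (Real.toNNReal_le_one.mpr hp1.le)).toMeasure)
      {ω | (Finset.univ.filter fun i => ω i u = true ∧ ω i v = true).card ≤ k}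
      ≤ ENNReal.ofReal T := by
  set ν := Measure.pi fun _ : B =>
    (PMF.bernoulli (Real.toNNReal p) (Real.toNNReal_le_one.mpr hp1.le)).toMeasure
  set S : Set (B → Bool) := {f | f u = true ∧ f v = true}
  have hS : MeasurableSet S := .of_discrete
  have hνS : ν S = ENNReal.ofReal (p ^ 2) := by
    rw [measure_pi_bernoulli_both_true _ huv, ENNReal.ofReal_pow hp0.le]; rfl
  have hνSc : ν Sᶜ = ENNReal.ofReal (1 - p ^ 2) := by
    rw [prob_compl_eq_one_sub hS, hνS, ← ENNReal.ofReal_one, ← ENNReal.ofReal_sub _ (by positivity)]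
  have hchernoff := pow_mul_measure_card_filter_mem_le_le (ι := Fin a) (ν := ν) hS
    (ENNReal.ofReal_le_one.mpr hy1) k
  rw [hνS, hνSc, Fintype.card_fin] at hchernoff
  rw [← ENNReal.mul_le_mul_iff_right (pow_ne_zero k (ENNReal.ofReal_pos.mpr hy0).ne')
    (ENNReal.pow_ne_top ENNReal.ofReal_ne_top)]
  calc _ ≤ _ := hchernoff
    _ = ENNReal.ofReal ((p ^ 2 * y + (1 - p ^ 2)) ^ a) := by
        rw [← ENNReal.ofReal_mul hy0.le, ← ENNReal.ofReal_add (by positivity) (by nlinarith),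
          ← ENNReal.ofReal_pow (by nlinarith), mul_comm]
    _ ≤ ENNReal.ofReal (y ^ k * T) := ENNReal.ofReal_le_ofReal hT
    _ = _ := by rw [ENNReal.ofReal_mul (by positivity), ENNReal.ofReal_pow hy0.le]

lemma measure_not_completes_le {a s : ℕ} (hs : 2 ≤ s) {B : Type*} [Fintype B] {p : ℝ}
    (hp0 : 0 < p) (hp1 : p < 1) (GA : SimpleGraph (Fin a))
    (hGA : ∀ S : Finset (Fin a), (a : ℝ) / Real.log a ^ 2 ≤ S.card →
      ∃ t : Finset (Fin a), t ⊆ S ∧ GA.IsNClique (s - 2) t)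
    {u v : B} (huv : u ≠ v) (hL : 1 ≤ Real.log a)
    (hLc : p ^ 2 / (1 - p ^ 2) + 2 * Real.log (Real.log a)
      ≤ -Real.log (1 - p ^ 2) * Real.log a) :
    (Measure.pi fun _ : Fin a => Measure.pi fun _ : B =>
        (PMF.bernoulli (Real.toNNReal p) (Real.toNNReal_le_one.mpr hp1.le)).toMeasure)
      {ω | ¬ (bipRandomGraph a B GA ω).Completes s (.inr u) (.inr v)}
      ≤ ENNReal.ofReal ((1 - p ^ 2) ^ ((a : ℝ) - a / Real.log a)) := by
  have hL0 : 0 < Real.log a := by linarith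
  refine (measure_mono fun ω =>
    card_filter_le_floor_of_not_completes hs (by positivity) hGA huv).trans ?_
  exact measure_card_filter_both_true_le hp0 hp1 huv (by positivity)
    (inv_le_one_of_one_le₀ (by nlinarith))
    (add_mul_inv_sq_pow_le (by positivity) (by nlinarith) hL hLc (Nat.floor_le (by positivity)))

/-- If every subset of A = Fin a of size a/(log a)² contains a K_{s−2}
of G_A, the A–B edges are independent with probability p, then for any collection E of
pairs of distinct vertices of B, the expected number of pairs of E not completed by the
resulting graph (adding the pair creates no K_s) is at most (1−p²)^{a − a/log a}·|E|,
for a sufficiently large. -/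
theorem stmt_12 (s : ℕ) (hs : 3 ≤ s) (p : ℝ) (hp0 : 0 < p) (hp1 : p < 1) :
    ∃ a₀ : ℕ, ∀ a : ℕ, a₀ ≤ a →
      ∀ (B : Type) [Fintype B] [DecidableEq B] (GA : SimpleGraph (Fin a)),
        (∀ S : Finset (Fin a), (a : ℝ) / (Real.log a) ^ 2 ≤ S.card →
          ∃ t : Finset (Fin a), t ⊆ S ∧ GA.IsNClique (s - 2) t) →
        ∀ E : Finset (B × B), (∀ e ∈ E, e.1 ≠ e.2) →
          (∫⁻ ω : Fin a → B → Bool,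
              ((E.filter fun e : B × B =>
                ¬ ∃ t : Finset (Fin a ⊕ B),
                  ((bipRandomGraph a B GA ω) ⊔
                    SimpleGraph.fromEdgeSet {s(Sum.inr e.1, Sum.inr e.2)}).IsNClique s t
                  ∧ Sum.inr e.1 ∈ t ∧ Sum.inr e.2 ∈ t).card : ℝ≥0∞)
            ∂(Measure.pi fun _ : Fin a => Measure.pi fun _ : B =>
                (PMF.bernoulli (Real.toNNReal p)
                  (Real.toNNReal_le_one.mpr hp1.le)).toMeasure))
          ≤ ENNReal.ofReal
              ((1 - p ^ 2) ^ ((a : ℝ) - (a : ℝ) / Real.log a) * E.card) := by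
  have hc : 0 < -Real.log (1 - p ^ 2) := neg_pos.mpr (Real.log_neg (by nlinarith) (by nlinarith))
  obtain ⟨a₀, ha₀⟩ := Filter.eventually_atTop.mp <|
    (Real.tendsto_log_atTop.comp tendsto_natCast_atTop_atTop).eventually
      ((Filter.eventually_ge_atTop 1).and (eventually_add_two_mul_log_le (p ^ 2 / (1 - p ^ 2)) hc))
  refine ⟨a₀, fun a ha B _ _ GA hGA E hE => ?_⟩
  obtain ⟨hL, hLc⟩ := ha₀ a ha
  set T := (1 - p ^ 2) ^ ((a : ℝ) - a / Real.log a)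
  calc _ = ∑ e ∈ E, (Measure.pi fun _ : Fin a => Measure.pi fun _ : B =>
          (PMF.bernoulli (Real.toNNReal p) (Real.toNNReal_le_one.mpr hp1.le)).toMeasure)
            {ω | ¬ (bipRandomGraph a B GA ω).Completes s (.inr e.1) (.inr e.2)} := by
        rw [← lintegral_card_filter_eq_sum_measure _ E _ fun _ _ => .of_discrete]
        congr!
    _ ≤ ∑ _e ∈ E, ENNReal.ofReal T :=
        Finset.sum_le_sum fun e he =>
          measure_not_completes_le (by omega) hp0 hp1 GA hGA (hE e he) hL hLc
    _ = ENNReal.ofReal (T * E.card) := by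
        rw [Finset.sum_const, nsmul_eq_mul, ENNReal.ofReal_mul (Real.rpow_nonneg (by nlinarith) _),
          ENNReal.ofReal_natCast, mul_comm]
end
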